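/- arXiv:1610.00867 — 7 statements merged into one kernel-verified Lean document; each statement's English description precedes it below -/
import Mathlib

section
/- Let X and Y be random variables on a probability space (Ω, μ) (μ a probability measure) taking values in finite types 𝒳 and 𝒴, let 𝓜 be a finite type, let φ : 𝒳 × 𝒴 → 𝓜, and set M = φ(X, Y). If there exists a map ψ : 𝓜 × 𝒳 → 𝒴 such that ψ(M, X) = Y almost surely, then H[M] ≥ H[Y | X]. -/
open MeasureTheory

/-- Shannon entropy of a random variable taking values in a finite type. -/
noncomputable def ent {Ω : Type*} [MeasurableSpace Ω] (μ : Measure Ω)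
    {α : Type*} [Fintype α] (X : Ω → α) : ℝ :=
  ∑ a : α, Real.negMulLog ((μ (X ⁻¹' {a})).toReal)

/-- `condEnt μ X Y` is the conditional Shannon entropy `H[Y | X]`. -/
noncomputable def condEnt {Ω : Type*} [MeasurableSpace Ω] (μ : Measure Ω)
    {α β : Type*} [Fintype α] [Fintype β] (X : Ω → α) (Y : Ω → β) : ℝ :=
  ent μ (fun ω => (X ω, Y ω)) - ent μ X

/-!
Since `ψ(M, X) = Y` almost surely, the pair `(X, Y)` is a.s. a function of `(M, X)`. Entropy does
not increase under functions and is subadditive, so `H[X, Y] ≤ H[M, X] ≤ H[M] + H[X]`, that is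
`H[Y | X] = H[X, Y] - H[X] ≤ H[M]`.
-/

namespace Real

lemma negMulLog_sum_le_sum_negMulLog {ι : Type*} (s : Finset ι) {p : ι → ℝ}
    (hp : ∀ i ∈ s, 0 ≤ p i) : negMulLog (∑ i ∈ s, p i) ≤ ∑ i ∈ s, negMulLog (p i) := by
  calc negMulLog (∑ i ∈ s, p i) = ∑ i ∈ s, p i * -log (∑ j ∈ s, p j) := by
        rw [← Finset.sum_mul, negMulLog, neg_mul_comm]
    _ ≤ ∑ i ∈ s, p i * -log (p i) := by
        refine Finset.sum_le_sum fun i hi => ?_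
        rcases (hp i hi).eq_or_lt with h | h
        · simp [← h]
        · gcongr
          exact Finset.single_le_sum hp hi
    _ = ∑ i ∈ s, negMulLog (p i) := by simp only [negMulLog, neg_mul_comm]

/-- The case `x = qr/p` of `log x ≤ x - 1`. -/
lemma negMulLog_le_of_le_of_le {p q r : ℝ} (hp : 0 ≤ p) (hpq : p ≤ q) (hpr : p ≤ r) :
    negMulLog p ≤ p * -log q + p * -log r + (q * r - p) := by
  rcases hp.eq_or_lt with rfl | hp
  · simpa using mul_nonneg (hp.trans hpq) (hp.trans hpr)
  have hq : 0 < q := hp.trans_le hpq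
  have hr : 0 < r := hp.trans_le hpr
  have hlog : log (q * r / p) ≤ q * r / p - 1 := log_le_sub_one_of_pos (by positivity)
  rw [log_div (by positivity) hp.ne', log_mul hq.ne' hr.ne'] at hlog
  have : p * (q * r / p - 1) = q * r - p := by field_simp
  rw [negMulLog]
  nlinarith [mul_le_mul_of_nonneg_left hlog hp.le]

end Real

open Real

section
variable {α β : Type*} [Fintype α] [Fintype β]

lemma sum_negMulLog_le_add_marginals (p : α × β → ℝ) (hp : ∀ c, 0 ≤ p c)
    (hp_sum : ∑ c, p c = 1) :
    ∑ c, negMulLog (p c) ≤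
      ∑ a, negMulLog (∑ b, p (a, b)) + ∑ b, negMulLog (∑ a, p (a, b)) := by
  set q : α → ℝ := fun a => ∑ b, p (a, b)
  set r : β → ℝ := fun b => ∑ a, p (a, b)
  have hq_sum : ∑ a, q a = 1 := by rw [← hp_sum, Fintype.sum_prod_type]
  have hr_sum : ∑ b, r b = 1 := by rw [← hp_sum, Fintype.sum_prod_type_right]
  calc ∑ c, negMulLog (p c)
      ≤ ∑ c, (p c * -log (q c.1) + p c * -log (r c.2) + (q c.1 * r c.2 - p c)) :=
        Finset.sum_le_sum fun c _ => negMulLog_le_of_le_of_le (hp c)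
          (Finset.single_le_sum (fun b _ => hp (c.1, b)) (Finset.mem_univ c.2))
          (Finset.single_le_sum (fun a _ => hp (a, c.2)) (Finset.mem_univ c.1))
    _ = ∑ a, negMulLog (q a) + ∑ b, negMulLog (r b) + ((∑ a, q a) * (∑ b, r b) - ∑ c, p c) := by
        have hq : ∑ c, p c * -log (q c.1) = ∑ a, negMulLog (q a) := by
          simp only [q, Fintype.sum_prod_type, ← Finset.sum_mul, negMulLog, neg_mul_comm]
        have hr : ∑ c, p c * -log (r c.2) = ∑ b, negMulLog (r b) := by
          simp only [r, Fintype.sum_prod_type_right, ← Finset.sum_mul, negMulLog, neg_mul_comm]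
        rw [Finset.sum_add_distrib, Finset.sum_add_distrib, Finset.sum_sub_distrib, hq, hr,
          Finset.sum_mul_sum, Fintype.sum_prod_type]
    _ = ∑ a, negMulLog (q a) + ∑ b, negMulLog (r b) := by
        rw [hq_sum, hr_sum, hp_sum]; ring

end

section
variable {Ω α β : Type*} [MeasurableSpace Ω] {μ : Measure Ω}

lemma ent_eq_sum_measureReal [Fintype α] (X : Ω → α) :
    ent μ X = ∑ a, negMulLog (μ.real (X ⁻¹' {a})) :=
  rfl

lemma ent_congr_ae [Fintype α] {X X' : Ω → α} (h : X =ᵐ[μ] X') : ent μ X = ent μ X' := by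
  simp only [ent_eq_sum_measureReal, measureReal_congr (h.preimage _)]

lemma measureReal_comp_preimage_singleton [Fintype α] [DecidableEq β] [IsFiniteMeasure μ]
    {W : Ω → α} (hW : ∀ a, MeasurableSet (W ⁻¹' {a})) (f : α → β) (b : β) :
    μ.real ((f ∘ W) ⁻¹' {b}) = ∑ a with f a = b, μ.real (W ⁻¹' {a}) := by
  rw [sum_measureReal_preimage_singleton _ fun a _ => hW a]
  congr 1
  ext ω
  simp

lemma ent_comp_le [Fintype α] [Fintype β] [IsFiniteMeasure μ] {W : Ω → α}
    (hW : ∀ a, MeasurableSet (W ⁻¹' {a})) (f : α → β) : ent μ (f ∘ W) ≤ ent μ W := by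
  classical
  calc ent μ (f ∘ W) = ∑ b, negMulLog (∑ a with f a = b, μ.real (W ⁻¹' {a})) := by
        simp only [ent_eq_sum_measureReal, measureReal_comp_preimage_singleton hW]
    _ ≤ ∑ b, ∑ a with f a = b, negMulLog (μ.real (W ⁻¹' {a})) :=
        Finset.sum_le_sum fun b _ =>
          negMulLog_sum_le_sum_negMulLog _ fun a _ => measureReal_nonneg
    _ = ent μ W := Finset.sum_fiberwise _ f _

variable {A : Ω → α} {B : Ω → β}

lemma measurableSet_preimage_singleton_prodMk (hA : ∀ a, MeasurableSet (A ⁻¹' {a}))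
    (hB : ∀ b, MeasurableSet (B ⁻¹' {b})) (c : α × β) :
    MeasurableSet ((fun ω => (A ω, B ω)) ⁻¹' {c}) := by
  have : (fun ω => (A ω, B ω)) ⁻¹' {c} = A ⁻¹' {c.1} ∩ B ⁻¹' {c.2} := by
    ext ω; simp [Prod.ext_iff]
  exact this ▸ (hA c.1).inter (hB c.2)

lemma measureReal_preimage_singleton_eq_sum_fst [Fintype α] [Fintype β] [IsFiniteMeasure μ]
    (hAB : ∀ c : α × β, MeasurableSet ((fun ω => (A ω, B ω)) ⁻¹' {c})) (a : α) :
    μ.real (A ⁻¹' {a}) = ∑ b, μ.real ((fun ω => (A ω, B ω)) ⁻¹' {(a, b)}) := by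
  classical
  refine (measureReal_comp_preimage_singleton (μ := μ) hAB Prod.fst a).trans ?_
  rw [Finset.sum_filter, Fintype.sum_prod_type,
    Finset.sum_eq_single a (fun x _ hx => by simp [hx]) (by simp)]
  simp

lemma measureReal_preimage_singleton_eq_sum_snd [Fintype α] [Fintype β] [IsFiniteMeasure μ]
    (hAB : ∀ c : α × β, MeasurableSet ((fun ω => (A ω, B ω)) ⁻¹' {c})) (b : β) :
    μ.real (B ⁻¹' {b}) = ∑ a, μ.real ((fun ω => (A ω, B ω)) ⁻¹' {(a, b)}) := by
  classical
  refine (measureReal_comp_preimage_singleton (μ := μ) hAB Prod.snd b).trans ?_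
  rw [Finset.sum_filter, Fintype.sum_prod_type_right,
    Finset.sum_eq_single b (fun y _ hy => by simp [hy]) (by simp)]
  simp

lemma ent_prodMk_le [Fintype α] [Fintype β] [IsProbabilityMeasure μ]
    (hA : ∀ a, MeasurableSet (A ⁻¹' {a})) (hB : ∀ b, MeasurableSet (B ⁻¹' {b})) :
    ent μ (fun ω => (A ω, B ω)) ≤ ent μ A + ent μ B := by
  have hAB := measurableSet_preimage_singleton_prodMk hA hB
  have h_total : ∑ c, μ.real ((fun ω => (A ω, B ω)) ⁻¹' {c}) = 1 := by
    simp [sum_measureReal_preimage_singleton (μ := μ) Finset.univ fun c _ => hAB c]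
  simpa only [ent_eq_sum_measureReal, measureReal_preimage_singleton_eq_sum_fst hAB,
    measureReal_preimage_singleton_eq_sum_snd hAB] using
    sum_negMulLog_le_add_marginals _ (fun c => measureReal_nonneg) h_total

end

/-- Cut-set converse for zero-error source coding of `Y` with decoder side
information `X`: if `Y` can be recovered almost surely from the message
`M = φ(X, Y)` and `X`, then `H[M] ≥ H[Y | X]`. -/
theorem zero_error_side_info_converse
    {Ω : Type*} [MeasurableSpace Ω] (μ : Measure Ω) [IsProbabilityMeasure μ]
    {𝒳 𝒴 𝓜 : Type*} [Fintype 𝒳] [Fintype 𝒴] [Fintype 𝓜]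
    [MeasurableSpace 𝒳] [MeasurableSingletonClass 𝒳]
    [MeasurableSpace 𝒴] [MeasurableSingletonClass 𝒴]
    (X : Ω → 𝒳) (Y : Ω → 𝒴) (hX : Measurable X) (hY : Measurable Y)
    (φ : 𝒳 × 𝒴 → 𝓜)
    (hdec : ∃ ψ : 𝓜 × 𝒳 → 𝒴, ∀ᵐ ω ∂μ, ψ (φ (X ω, Y ω), X ω) = Y ω) :
    ent μ (fun ω => φ (X ω, Y ω)) ≥ condEnt μ X Y := by
  obtain ⟨ψ, hψ⟩ := hdec
  set M : Ω → 𝓜 := fun ω => φ (X ω, Y ω)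
  have hX_fiber : ∀ x, MeasurableSet (X ⁻¹' {x}) := fun x => hX (.singleton x)
  have hM_fiber : ∀ m, MeasurableSet (M ⁻¹' {m}) := fun m =>
    hX.prodMk hY (Set.toFinite (φ ⁻¹' {m})).measurableSet
  have h_decode : (fun ω => (X ω, Y ω)) =ᵐ[μ] (fun c => (c.2, ψ c)) ∘ fun ω => (M ω, X ω) := by
    filter_upwards [hψ] with ω hω
    simp [M, hω]
  have h_pair : ent μ (fun ω => (X ω, Y ω)) ≤ ent μ (fun ω => (M ω, X ω)) := by
    rw [ent_congr_ae h_decode]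
    exact ent_comp_le (measurableSet_preimage_singleton_prodMk hM_fiber hX_fiber) _
  calc condEnt μ X Y ≤ ent μ (fun ω => (M ω, X ω)) - ent μ X := sub_le_sub_right h_pair _
    _ ≤ ent μ M := by linarith [ent_prodMk_le (μ := μ) hM_fiber hX_fiber]
end

section
/- Let X and Y be random variables on a probability space (Ω, μ) (μ a probability measure) taking values in finite types 𝒳 and 𝒴; let S = {(x, y) : P(X = x, Y = y) > 0} be the support of (X, Y). Let f : 𝒳 × 𝒴 → 𝒵₁, g : 𝒳 × 𝒴 → 𝒵₂, h : 𝒳 × 𝒴 → 𝒵 (𝒵₁, 𝒵₂, 𝒵 finite types) satisfy: (i) for all (x, y), (x, y') ∈ S, h(x, y) = h(x, y') if and only if f(x, y) = f(x, y'); and (ii) for all (x, y), (x', y) ∈ S, h(x, y) = h(x', y) if and only if g(x, y) = g(x', y). Then H[f(X, Y) | (h(X, Y), X)] = 0 and H[g(X, Y) | (h(X, Y), Y)] = 0, and also H[h(X, Y) | (f(X, Y), X)] = 0 and H[h(X, Y) | (g(X, Y), Y)] = 0. -/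
open MeasureTheory

open Classical in
lemma pos_support {Ω : Type*} [MeasurableSpace Ω] (μ : Measure Ω)
    {𝒳 𝒴 : Type*} [Fintype 𝒳] [Fintype 𝒴]
    (X : Ω → 𝒳) (Y : Ω → 𝒴)
    (P : 𝒳 × 𝒴 → Prop) (hpos : 0 < μ {ω | P (X ω, Y ω)}) :
    ∃ p, P p ∧ 0 < μ {ω | X ω = p.1 ∧ Y ω = p.2} := by
  by_contra hc
  push_neg at hc
  have hsub : {ω | P (X ω, Y ω)} ⊆
      ⋃ p ∈ (Finset.univ.filter P), {ω | X ω = p.1 ∧ Y ω = p.2} := by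
    intro ω hω
    simp only [Set.mem_iUnion]
    exact ⟨(X ω, Y ω), by simpa using hω, rfl, rfl⟩
  have hle : μ {ω | P (X ω, Y ω)} ≤
      ∑ p ∈ (Finset.univ.filter P), μ {ω | X ω = p.1 ∧ Y ω = p.2} :=
    (measure_mono hsub).trans (measure_biUnion_finset_le _ _)
  have hz : ∑ p ∈ (Finset.univ.filter P), μ {ω | X ω = p.1 ∧ Y ω = p.2} = 0 := by
    refine Finset.sum_eq_zero fun p hp => ?_
    have := hc p (by simpa using hp)
    simpa [pos_iff_ne_zero, not_not] using this
  rw [hz] at hle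
  exact hpos.ne' (le_antisymm hle zero_le)

lemma condEnt_zero_of_det {Ω : Type*} [MeasurableSpace Ω] (μ : Measure Ω) [IsFiniteMeasure μ]
    {α β : Type*} [Fintype α] [Fintype β] (V : Ω → α) (W : Ω → β)
    (hmeas : ∀ v w, MeasurableSet {ω | V ω = v ∧ W ω = w})
    (hdet : ∀ v w w', 0 < μ {ω | V ω = v ∧ W ω = w} →
      0 < μ {ω | V ω = v ∧ W ω = w'} → w = w') :
    condEnt μ V W = 0 := by
  have key : ent μ (fun ω => (V ω, W ω)) = ent μ V := by
    unfold ent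
    rw [Fintype.sum_prod_type]
    refine Finset.sum_congr rfl fun v _ => ?_
    have hpre : ∀ w, (fun ω => (V ω, W ω)) ⁻¹' {(v, w)} = {ω | V ω = v ∧ W ω = w} := by
      intro w; ext ω; simp [Prod.ext_iff]
    have hunion : V ⁻¹' {v} = ⋃ w ∈ (Finset.univ : Finset β), {ω | V ω = v ∧ W ω = w} := by
      ext ω; simp
    have hVmeas : μ (V ⁻¹' {v}) = ∑ w : β, μ {ω | V ω = v ∧ W ω = w} := by
      rw [hunion, measure_biUnion_finset]
      · intro w _ w' _ hww
        simp only [Function.onFun, Set.disjoint_left]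
        rintro ω ⟨_, hw⟩ ⟨_, hw'⟩
        exact hww (hw ▸ hw')
      · intro w _; exact hmeas v w
    by_cases hex : ∃ w, 0 < μ {ω | V ω = v ∧ W ω = w}
    · obtain ⟨w0, hw0⟩ := hex
      have hzero : ∀ w, w ≠ w0 → μ {ω | V ω = v ∧ W ω = w} = 0 := by
        intro w hw
        by_contra hne
        exact hw (hdet v w w0 (pos_iff_ne_zero.mpr hne) hw0)
      have h1 : ∑ w : β, Real.negMulLog ((μ ((fun ω => (V ω, W ω)) ⁻¹' {(v, w)})).toReal)
          = Real.negMulLog ((μ {ω | V ω = v ∧ W ω = w0}).toReal) := by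
        rw [Finset.sum_eq_single w0]
        · rw [hpre]
        · intro w _ hw; rw [hpre, hzero w hw]; simp
        · simp
      have h2 : μ (V ⁻¹' {v}) = μ {ω | V ω = v ∧ W ω = w0} := by
        rw [hVmeas, Finset.sum_eq_single w0]
        · intro w _ hw; exact hzero w hw
        · simp
      rw [h1, h2]
    · push_neg at hex
      have hall : ∀ w, μ {ω | V ω = v ∧ W ω = w} = 0 := by
        intro w
        have := hex w
        simpa [pos_iff_ne_zero, not_not] using this
      have h2 : μ (V ⁻¹' {v}) = 0 := by
        rw [hVmeas]; exact Finset.sum_eq_zero fun w _ => hall w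
      rw [h2]
      simp only [hpre]
      rw [Finset.sum_eq_zero fun w _ => by rw [hall w]; simp]
      simp
  unfold condEnt
  rw [key, sub_self]

lemma meas_pairset {Ω : Type*} [MeasurableSpace Ω]
    {𝒳 𝒴 : Type*} [Fintype 𝒳] [Fintype 𝒴]
    [MeasurableSpace 𝒳] [MeasurableSingletonClass 𝒳]
    [MeasurableSpace 𝒴] [MeasurableSingletonClass 𝒴]
    {X : Ω → 𝒳} {Y : Ω → 𝒴} (hX : Measurable X) (hY : Measurable Y)
    (P : 𝒳 × 𝒴 → Prop) : MeasurableSet {ω | P (X ω, Y ω)} := by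
  have : {ω | P (X ω, Y ω)} = (fun ω => (X ω, Y ω)) ⁻¹' {p | P p} := rfl
  rw [this]
  exact (hX.prodMk hY) (Set.toFinite _).measurableSet

/-- First part of Lemma 4 (lemma_rooks): if `h` induces the same modified rook's
graph as the pair `(f, g)` on the support of `(X, Y)` (compatibility), then
`H[f(X,Y) | (h(X,Y), X)] = 0`, `H[g(X,Y) | (h(X,Y), Y)] = 0`,
`H[h(X,Y) | (f(X,Y), X)] = 0` and `H[h(X,Y) | (g(X,Y), Y)] = 0`. -/
theorem compatible_functions_determined
    {Ω : Type*} [MeasurableSpace Ω] (μ : Measure Ω) [IsProbabilityMeasure μ]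
    {𝒳 𝒴 𝒵₁ 𝒵₂ 𝒵 : Type*} [Fintype 𝒳] [Fintype 𝒴] [Fintype 𝒵₁] [Fintype 𝒵₂] [Fintype 𝒵]
    [MeasurableSpace 𝒳] [MeasurableSingletonClass 𝒳]
    [MeasurableSpace 𝒴] [MeasurableSingletonClass 𝒴]
    (X : Ω → 𝒳) (Y : Ω → 𝒴) (hX : Measurable X) (hY : Measurable Y)
    (f : 𝒳 × 𝒴 → 𝒵₁) (g : 𝒳 × 𝒴 → 𝒵₂) (h : 𝒳 × 𝒴 → 𝒵)
    (hi : ∀ p ∈ {p : 𝒳 × 𝒴 | 0 < μ {ω | X ω = p.1 ∧ Y ω = p.2}},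
      ∀ q ∈ {p : 𝒳 × 𝒴 | 0 < μ {ω | X ω = p.1 ∧ Y ω = p.2}},
      p.1 = q.1 → (h p = h q ↔ f p = f q))
    (hii : ∀ p ∈ {p : 𝒳 × 𝒴 | 0 < μ {ω | X ω = p.1 ∧ Y ω = p.2}},
      ∀ q ∈ {p : 𝒳 × 𝒴 | 0 < μ {ω | X ω = p.1 ∧ Y ω = p.2}},
      p.2 = q.2 → (h p = h q ↔ g p = g q)) :
    condEnt μ (fun ω => (h (X ω, Y ω), X ω)) (fun ω => f (X ω, Y ω)) = 0 ∧
    condEnt μ (fun ω => (h (X ω, Y ω), Y ω)) (fun ω => g (X ω, Y ω)) = 0 ∧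
    condEnt μ (fun ω => (f (X ω, Y ω), X ω)) (fun ω => h (X ω, Y ω)) = 0 ∧
    condEnt μ (fun ω => (g (X ω, Y ω), Y ω)) (fun ω => h (X ω, Y ω)) = 0 := by

  refine ⟨?_, ?_, ?_, ?_⟩
  · refine condEnt_zero_of_det μ _ _ (fun v w => meas_pairset hX hY (fun p => (h p, p.1) = v ∧ f p = w)) ?_
    intro v w w' hw hw'
    obtain ⟨p, ⟨hph, hpf⟩, hppos⟩ :=
      pos_support μ X Y (fun p => (h p, p.1) = v ∧ f p = w) hw
    obtain ⟨q, ⟨hqh, hqf⟩, hqpos⟩ :=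
      pos_support μ X Y (fun p => (h p, p.1) = v ∧ f p = w') hw'
    rw [Prod.ext_iff] at hph hqh
    have hx : p.1 = q.1 := hph.2.trans hqh.2.symm
    have hh : h p = h q := hph.1.trans hqh.1.symm
    rw [← hpf, ← hqf]
    exact (hi p hppos q hqpos hx).mp hh
  · refine condEnt_zero_of_det μ _ _ (fun v w => meas_pairset hX hY (fun p => (h p, p.2) = v ∧ g p = w)) ?_
    intro v w w' hw hw'
    obtain ⟨p, ⟨hph, hpg⟩, hppos⟩ :=
      pos_support μ X Y (fun p => (h p, p.2) = v ∧ g p = w) hw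
    obtain ⟨q, ⟨hqh, hqg⟩, hqpos⟩ :=
      pos_support μ X Y (fun p => (h p, p.2) = v ∧ g p = w') hw'
    rw [Prod.ext_iff] at hph hqh
    have hy : p.2 = q.2 := hph.2.trans hqh.2.symm
    have hh : h p = h q := hph.1.trans hqh.1.symm
    rw [← hpg, ← hqg]
    exact (hii p hppos q hqpos hy).mp hh
  · refine condEnt_zero_of_det μ _ _ (fun v w => meas_pairset hX hY (fun p => (f p, p.1) = v ∧ h p = w)) ?_
    intro v z z' hz hz'
    obtain ⟨p, ⟨hpf, hph⟩, hppos⟩ :=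
      pos_support μ X Y (fun p => (f p, p.1) = v ∧ h p = z) hz
    obtain ⟨q, ⟨hqf, hqh⟩, hqpos⟩ :=
      pos_support μ X Y (fun p => (f p, p.1) = v ∧ h p = z') hz'
    rw [Prod.ext_iff] at hpf hqf
    have hx : p.1 = q.1 := hpf.2.trans hqf.2.symm
    have hf : f p = f q := hpf.1.trans hqf.1.symm
    rw [← hph, ← hqh]
    exact (hi p hppos q hqpos hx).mpr hf
  · refine condEnt_zero_of_det μ _ _ (fun v w => meas_pairset hX hY (fun p => (g p, p.2) = v ∧ h p = w)) ?_
    intro v z z' hz hz'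
    obtain ⟨p, ⟨hpg, hph⟩, hppos⟩ :=
      pos_support μ X Y (fun p => (g p, p.2) = v ∧ h p = z) hz
    obtain ⟨q, ⟨hqg, hqh⟩, hqpos⟩ :=
      pos_support μ X Y (fun p => (g p, p.2) = v ∧ h p = z') hz'
    rw [Prod.ext_iff] at hpg hqg
    have hy : p.2 = q.2 := hpg.2.trans hqg.2.symm
    have hg : g p = g q := hpg.1.trans hqg.1.symm
    rw [← hph, ← hqh]
    exact (hii p hppos q hqpos hy).mpr hg
end

section
/- Let X and Y be random variables on a probability space (Ω, μ) (μ a probability measure) taking values in finite types 𝒳 and 𝒴; let S = {(x, y) : P(X = x, Y = y) > 0} be the support of (X, Y). Let f : 𝒳 × 𝒴 → 𝒵₁, g : 𝒳 × 𝒴 → 𝒵₂, h : 𝒳 × 𝒴 → 𝒵 (𝒵₁, 𝒵₂, 𝒵 finite types) satisfy: (i) for all (x, y), (x, y') ∈ S, h(x, y) = h(x, y') if and only if f(x, y) = f(x, y'); and (ii) for all (x, y), (x', y) ∈ S, h(x, y) = h(x', y) if and only if g(x, y) = g(x', y). Then H[h(X, Y) | X] = H[f(X, Y) | X] and H[h(X,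 Y) | Y] = H[g(X, Y) | Y]. -/
open MeasureTheory

/-!
On the support of `W = (X, Y)`, condition (i) says that `(X, h(X, Y))` and `(X, f(X, Y))` induce
the same partition, so each is almost surely a function of the other and
`H[X, h(X, Y)] = H[X, h(X, Y), f(X, Y)] = H[X, f(X, Y)]`; subtracting `H[X]` gives the first
identity. The second one is the same argument with `Y` and (ii).
-/

open Finset

theorem Finset.sum_comp_eq_comp_sum_of_subsingleton {ι M N : Type*} [AddCommMonoid M]
    [AddCommMonoid N] (F : M → N) (hF : F 0 = 0) (s : Finset ι) (x : ι → M)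
    (hx : ∀ i ∈ s, ∀ j ∈ s, x i ≠ 0 → x j ≠ 0 → i = j) :
    ∑ i ∈ s, F (x i) = F (∑ i ∈ s, x i) := by
  by_cases hne : ∃ i ∈ s, x i ≠ 0
  · obtain ⟨i, hi, hxi⟩ := hne
    have hzero : ∀ j ∈ s, j ≠ i → x j = 0 := fun j hj hji => by
      by_contra hxj
      exact hji (hx j hj i hi hxj hxi)
    rw [sum_eq_single_of_mem i hi fun j hj hji => by rw [hzero j hj hji, hF],
      sum_eq_single_of_mem i hi hzero]
  · push Not at hne
    rw [sum_eq_zero fun i hi => by rw [hne i hi, hF], sum_eq_zero hne, hF]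

section

variable {Ω : Type*} [MeasurableSpace Ω] (μ : Measure Ω)
  {α β γ γ' : Type*} [Fintype α] [Fintype β] [Fintype γ] [Fintype γ']

theorem ent_comp_equiv (e : α ≃ β) (Z : Ω → α) : ent μ (e ∘ Z) = ent μ Z := by
  unfold ent
  rw [← e.sum_comp]
  congr! with a
  ext ω
  simp

theorem ent_prod_eq_left [IsFiniteMeasure μ] (Z₁ : Ω → α) (Z₂ : Ω → β)
    (hZ : ∀ p, MeasurableSet ((fun ω => (Z₁ ω, Z₂ ω)) ⁻¹' {p}))
    (hdet : ∀ a b b', μ ((fun ω => (Z₁ ω, Z₂ ω)) ⁻¹' {(a, b)}) ≠ 0 →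
      μ ((fun ω => (Z₁ ω, Z₂ ω)) ⁻¹' {(a, b')}) ≠ 0 → b = b') :
    ent μ (fun ω => (Z₁ ω, Z₂ ω)) = ent μ Z₁ := by
  unfold ent
  rw [Fintype.sum_prod_type]
  refine sum_congr rfl fun a _ => ?_
  rw [sum_comp_eq_comp_sum_of_subsingleton _ Real.negMulLog_zero _ _ fun b _ b' _ hb hb' =>
    hdet a b b' (ENNReal.toReal_ne_zero.1 hb).1 (ENNReal.toReal_ne_zero.1 hb').1,
    ← ENNReal.toReal_sum fun _ _ => measure_ne_top _ _]
  have hfiber :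
      Z₁ ⁻¹' {a} = (fun ω => (Z₁ ω, Z₂ ω)) ⁻¹' ↑(univ.map (Function.Embedding.sectR a β)) := by
    ext ω
    simp [eq_comm]
  rw [hfiber, ← sum_measure_preimage_singleton _ fun p _ => hZ p, sum_map]
  rfl

theorem exists_measure_preimage_ne_zero_of_comp {ι κ : Type*} [Countable ι] {W : Ω → ι}
    (g : ι → κ) {c : κ}
    (hc : μ ((g ∘ W) ⁻¹' {c}) ≠ 0) : ∃ w, μ (W ⁻¹' {w}) ≠ 0 ∧ g w = c := by
  by_contra! H
  have hcover : (g ∘ W) ⁻¹' {c} ⊆ ⋃ w ∈ g ⁻¹' {c}, W ⁻¹' {w} := fun ω hω =>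
    Set.mem_biUnion (x := W ω) hω rfl
  refine hc (measure_mono_null hcover
    ((measure_biUnion_null_iff (Set.to_countable _)).2 fun w hw => ?_))
  by_contra hw'
  exact H w hw' hw

variable [IsFiniteMeasure μ] [MeasurableSpace β] [MeasurableSingletonClass β]

theorem ent_prod_comp_eq_left {W : Ω → β} (hW : Measurable W) (φ : β → γ) (ψ : β → γ')
    (hdet : ∀ w w', μ (W ⁻¹' {w}) ≠ 0 → μ (W ⁻¹' {w'}) ≠ 0 → φ w = φ w' → ψ w = ψ w') :
    ent μ (fun ω => (φ (W ω), ψ (W ω))) = ent μ (φ ∘ W) := by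
  refine ent_prod_eq_left μ _ _
    (fun p => hW (Set.toFinite ((fun w => (φ w, ψ w)) ⁻¹' {p})).measurableSet) ?_
  intro a b b' hb hb'
  obtain ⟨w, hw, hwab⟩ := exists_measure_preimage_ne_zero_of_comp μ (fun w => (φ w, ψ w)) hb
  obtain ⟨w', hw', hwab'⟩ := exists_measure_preimage_ne_zero_of_comp μ (fun w => (φ w, ψ w)) hb'
  simp only [Prod.mk.injEq] at hwab hwab'
  rw [← hwab.2, ← hwab'.2]
  exact hdet w w' hw hw' (hwab.1.trans hwab'.1.symm)

theorem ent_comp_eq_of_fibers_iff {W : Ω → β} (hW : Measurable W) (φ : β → γ) (ψ : β → γ')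
    (hφψ : ∀ w w', μ (W ⁻¹' {w}) ≠ 0 → μ (W ⁻¹' {w'}) ≠ 0 → (φ w = φ w' ↔ ψ w = ψ w')) :
    ent μ (φ ∘ W) = ent μ (ψ ∘ W) :=
  calc ent μ (φ ∘ W)
      = ent μ (Equiv.prodComm γ' γ ∘ fun ω => (ψ (W ω), φ (W ω))) :=
        (ent_prod_comp_eq_left μ hW φ ψ fun w w' hw hw' => (hφψ w w' hw hw').1).symm
    _ = ent μ (ψ ∘ W) := by
        rw [ent_comp_equiv, ent_prod_comp_eq_left μ hW ψ φ fun w w' hw hw' =>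
          (hφψ w w' hw hw').2]

end

/-- Second part of Lemma 4 (lemma_rooks): if `h` induces the same modified rook's
graph as the pair `(f, g)` on the support of `(X, Y)` (compatibility), then
`H[h(X,Y) | X] = H[f(X,Y) | X]` and `H[h(X,Y) | Y] = H[g(X,Y) | Y]`. -/
theorem compatible_functions_condEnt_eq
    {Ω : Type*} [MeasurableSpace Ω] (μ : Measure Ω) [IsProbabilityMeasure μ]
    {𝒳 𝒴 𝒵₁ 𝒵₂ 𝒵 : Type*} [Fintype 𝒳] [Fintype 𝒴] [Fintype 𝒵₁] [Fintype 𝒵₂] [Fintype 𝒵]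
    [MeasurableSpace 𝒳] [MeasurableSingletonClass 𝒳]
    [MeasurableSpace 𝒴] [MeasurableSingletonClass 𝒴]
    (X : Ω → 𝒳) (Y : Ω → 𝒴) (hX : Measurable X) (hY : Measurable Y)
    (f : 𝒳 × 𝒴 → 𝒵₁) (g : 𝒳 × 𝒴 → 𝒵₂) (h : 𝒳 × 𝒴 → 𝒵)
    (hi : ∀ p ∈ {p : 𝒳 × 𝒴 | 0 < μ {ω | X ω = p.1 ∧ Y ω = p.2}},
      ∀ q ∈ {p : 𝒳 × 𝒴 | 0 < μ {ω | X ω = p.1 ∧ Y ω = p.2}},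
      p.1 = q.1 → (h p = h q ↔ f p = f q))
    (hii : ∀ p ∈ {p : 𝒳 × 𝒴 | 0 < μ {ω | X ω = p.1 ∧ Y ω = p.2}},
      ∀ q ∈ {p : 𝒳 × 𝒴 | 0 < μ {ω | X ω = p.1 ∧ Y ω = p.2}},
      p.2 = q.2 → (h p = h q ↔ g p = g q)) :
    condEnt μ X (fun ω => h (X ω, Y ω)) = condEnt μ X (fun ω => f (X ω, Y ω)) ∧
    condEnt μ Y (fun ω => h (X ω, Y ω)) = condEnt μ Y (fun ω => g (X ω, Y ω)) := by
  have hW : Measurable fun ω => (X ω, Y ω) := hX.prodMk hY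
  have hsupp : ∀ p, μ ((fun ω => (X ω, Y ω)) ⁻¹' {p}) ≠ 0 →
      0 < μ {ω | X ω = p.1 ∧ Y ω = p.2} := fun p hp => by
    simpa [pos_iff_ne_zero, Set.preimage, Prod.ext_iff] using hp
  unfold condEnt
  constructor
  · congr 1
    refine ent_comp_eq_of_fibers_iff μ hW (fun p => (p.1, h p)) (fun p => (p.1, f p))
      fun p q hp hq => ?_
    exact Prod.mk_inj.trans
      ((and_congr_right (hi p (hsupp p hp) q (hsupp q hq))).trans Prod.mk_inj.symm)
  · congr 1
    refine ent_comp_eq_of_fibers_iff μ hW (fun p => (p.2, h p)) (fun p => (p.2, g p))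
      fun p q hp hq => ?_
    exact Prod.mk_inj.trans
      ((and_congr_right (hii p (hsupp p hp) q (hsupp q hq))).trans Prod.mk_inj.symm)
end

section
/- Let 𝒵₁, 𝒵₂ be types and let f : Bool × Bool → 𝒵₁ and g : Bool × Bool → 𝒵₂. Let G be the simple graph on Bool × Bool in which distinct vertices (x, y), (x', y') are adjacent iff (x = x' and f(x, y) ≠ f(x', y')) or (y = y' and g(x, y) ≠ g(x', y')). Then the following are equivalent: (1) there exists a type 𝒵 and a map h : Bool × Bool → 𝒵 such that G equals the graph on Bool × Bool in which distinct (x, y), (x', y') are adjacent iff (x = x' and h(x, y) ≠ h(x', y')) or (y = y' and h(x, y) ≠ h(x', y')); (2) G does not have exactly one edge. -/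
/-!
A function `h` whose graph is the modified rook's graph `G` of `f` and `g` is constant along
every pair of cells in a common row or column that is not an edge of `G`, hence on the
connected components of this agreement graph; so no edge of `G` may join two cells of one
component. Conversely, if no edge does, the component map itself is such an `h`.

On `Bool × Bool` the rook's graph is a 4-cycle. The endpoints of an edge of `G` are joined
in the agreement graph exactly when the other three sides are agreements, that is, when the
edge is the only edge of `G`; there is no other route because any two distinct sides of the
4-cycle form a cut.
-/

/-- The `Z₁Z₂`-modified rook's graph of `f : 𝒳 × 𝒴 → 𝒵₁` and `g : 𝒳 × 𝒴 → 𝒵₂`: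
distinct vertices `(x, y)` and `(x', y')` are adjacent iff
(`x = x'` and `f(x, y) ≠ f(x', y')`) or (`y = y'` and `g(x, y) ≠ g(x', y')`). -/
def modifiedRookGraph {𝒳 𝒴 𝒵₁ 𝒵₂ : Type*}
    (f : 𝒳 × 𝒴 → 𝒵₁) (g : 𝒳 × 𝒴 → 𝒵₂) : SimpleGraph (𝒳 × 𝒴) where
  Adj p q := p ≠ q ∧ ((p.1 = q.1 ∧ f p ≠ f q) ∨ (p.2 = q.2 ∧ g p ≠ g q))
  symm := ⟨by
    rintro p q ⟨hpq, h | h⟩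
    · exact ⟨hpq.symm, Or.inl ⟨h.1.symm, h.2.symm⟩⟩
    · exact ⟨hpq.symm, Or.inr ⟨h.1.symm, h.2.symm⟩⟩⟩
  loopless := ⟨fun p hp => hp.1 rfl⟩

open SimpleGraph

abbrev rookGraph (𝒳 𝒴 : Type*) : SimpleGraph (𝒳 × 𝒴) := ⊤ □ ⊤

theorem rookGraph_adj {𝒳 𝒴 : Type*} {p q : 𝒳 × 𝒴} :
    (rookGraph 𝒳 𝒴).Adj p q ↔ p ≠ q ∧ (p.1 = q.1 ∨ p.2 = q.2) := by
  simp only [boxProd_adj, top_adj, Ne, Prod.ext_iff]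
  tauto

theorem SimpleGraph.Reachable.exists_adj_mem_not_mem {V : Type*} {G : SimpleGraph V}
    {u v : V} (h : G.Reachable u v) {S : Set V} (hu : u ∈ S) (hv : v ∉ S) :
    ∃ x y, G.Adj x y ∧ x ∈ S ∧ y ∉ S := by
  obtain ⟨w⟩ := h
  obtain ⟨d, -, hd, hd'⟩ := w.exists_boundary_dart S hu hv
  exact ⟨d.fst, d.snd, d.adj, hd, hd'⟩

section

variable {𝒳 𝒴 𝒵₁ 𝒵₂ : Type*}

theorem modifiedRookGraph_le_rookGraph (f : 𝒳 × 𝒴 → 𝒵₁) (g : 𝒳 × 𝒴 → 𝒵₂) :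
    modifiedRookGraph f g ≤ rookGraph 𝒳 𝒴 := by
  rintro p q ⟨hpq, ⟨h, -⟩ | ⟨h, -⟩⟩
  exacts [rookGraph_adj.mpr ⟨hpq, .inl h⟩, rookGraph_adj.mpr ⟨hpq, .inr h⟩]

theorem modifiedRookGraph_self_adj (h : 𝒳 × 𝒴 → 𝒵₁) {p q : 𝒳 × 𝒴} :
    (modifiedRookGraph h h).Adj p q ↔ (rookGraph 𝒳 𝒴).Adj p q ∧ h p ≠ h q := by
  rw [rookGraph_adj]
  change p ≠ q ∧ ((p.1 = q.1 ∧ h p ≠ h q) ∨ (p.2 = q.2 ∧ h p ≠ h q)) ↔ _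
  tauto

def agreementGraph (f : 𝒳 × 𝒴 → 𝒵₁) (g : 𝒳 × 𝒴 → 𝒵₂) : SimpleGraph (𝒳 × 𝒴) :=
  rookGraph 𝒳 𝒴 \ modifiedRookGraph f g

end

def Compatible {𝒳 𝒴 : Type} {𝒵₁ 𝒵₂ : Type*} (f : 𝒳 × 𝒴 → 𝒵₁) (g : 𝒳 × 𝒴 → 𝒵₂) : Prop :=
  ∃ (𝒵 : Type) (h : 𝒳 × 𝒴 → 𝒵), modifiedRookGraph f g = modifiedRookGraph h h

theorem compatible_iff_forall_adj_not_reachable {𝒳 𝒴 : Type} {𝒵₁ 𝒵₂ : Type*}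
    (f : 𝒳 × 𝒴 → 𝒵₁) (g : 𝒳 × 𝒴 → 𝒵₂) :
    Compatible f g ↔
      ∀ p q, (modifiedRookGraph f g).Adj p q → ¬(agreementGraph f g).Reachable p q := by
  constructor
  · rintro ⟨𝒵, h, hfg⟩ p q hpq hreach
    rw [hfg, modifiedRookGraph_self_adj] at hpq
    obtain ⟨x, y, ⟨hrook, hagree⟩, hx, hy⟩ :=
      hreach.exists_adj_mem_not_mem (S := {x | h x = h p}) rfl (Ne.symm hpq.2)
    rw [hfg, modifiedRookGraph_self_adj, not_and, not_not] at hagree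
    exact hy ((hagree hrook).symm.trans hx)
  · intro hsep
    refine ⟨_, (agreementGraph f g).connectedComponentMk, ?_⟩
    ext p q
    rw [modifiedRookGraph_self_adj, Ne, ConnectedComponent.eq]
    refine ⟨fun hpq => ⟨modifiedRookGraph_le_rookGraph f g hpq, hsep p q hpq⟩, ?_⟩
    rintro ⟨hrook, hnreach⟩
    by_contra hpq
    exact hnreach (Adj.reachable ⟨hrook, hpq⟩)

theorem rookGraph_bool_exists_detour {p q : Bool × Bool} (hpq : (rookGraph Bool Bool).Adj p q) :
    ∃ a b, (rookGraph Bool Bool).Adj p a ∧ (rookGraph Bool Bool).Adj a b ∧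
      (rookGraph Bool Bool).Adj b q ∧
      s(p, a) ≠ s(p, q) ∧ s(a, b) ≠ s(p, q) ∧ s(b, q) ≠ s(p, q) := by
  revert p q
  simp only [rookGraph_adj]
  decide

set_option synthInstance.maxSize 2000 in
theorem rookGraph_bool_exists_cut {p q u v : Bool × Bool} (hpq : (rookGraph Bool Bool).Adj p q)
    (huv : (rookGraph Bool Bool).Adj u v) (hne : s(u, v) ≠ s(p, q)) :
    ∃ S : Finset (Bool × Bool), p ∈ S ∧ q ∉ S ∧ ∀ x y, (rookGraph Bool Bool).Adj x y →
      x ∈ S → y ∉ S → s(x, y) = s(p, q) ∨ s(x, y) = s(u, v) := by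
  revert p q u v
  simp only [rookGraph_adj]
  decide

theorem rookGraph_bool_sdiff_reachable_iff {G : SimpleGraph (Bool × Bool)}
    (hG : G ≤ rookGraph Bool Bool) {p q : Bool × Bool} (hpq : G.Adj p q) :
    (rookGraph Bool Bool \ G).Reachable p q ↔ G.edgeSet = {s(p, q)} := by
  constructor
  · intro hreach
    refine Set.eq_singleton_iff_unique_mem.mpr ⟨hpq, fun e he => ?_⟩
    induction e using Sym2.ind with | _ u v => ?_
    by_contra hne
    obtain ⟨S, hp, hq, hcut⟩ := rookGraph_bool_exists_cut (hG hpq) (hG he) hne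
    obtain ⟨x, y, ⟨hrook, hnG⟩, hx, hy⟩ := hreach.exists_adj_mem_not_mem (S := ↑S) hp hq
    rcases hcut x y hrook hx hy with h | h <;>
      exact hnG (by rw [← mem_edgeSet, h]; assumption)
  · intro hsingle
    have hsdiff {x y} (hrook : (rookGraph Bool Bool).Adj x y) (hne : s(x, y) ≠ s(p, q)) :
        (rookGraph Bool Bool \ G).Adj x y :=
      ⟨hrook, fun hxy => hne (by rw [← Set.mem_singleton_iff, ← hsingle]; exact hxy)⟩
    obtain ⟨a, b, hpa, hab, hbq, hpa', hab', hbq'⟩ := rookGraph_bool_exists_detour (hG hpq)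
    exact (hsdiff hpa hpa').reachable.trans
      ((hsdiff hab hab').reachable.trans (hsdiff hbq hbq').reachable)

/-- For binary `X, Y` with full support, the pair `(f, g)` is compatible (its
modified rook's graph is the `hh`-modified rook's graph of some single function
`h`) if and only if the modified rook's graph does not have exactly one edge. -/
theorem binary_compatible_iff_not_one_edge
    {𝒵₁ 𝒵₂ : Type*} (f : Bool × Bool → 𝒵₁) (g : Bool × Bool → 𝒵₂) :
    (∃ (𝒵 : Type) (h : Bool × Bool → 𝒵),
        modifiedRookGraph f g = modifiedRookGraph h h) ↔
      ¬ ∃ e, (modifiedRookGraph f g).edgeSet = {e} := by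
  have hG := modifiedRookGraph_le_rookGraph f g
  refine (compatible_iff_forall_adj_not_reachable f g).trans ⟨?_, ?_⟩
  · rintro hsep ⟨e, he⟩
    induction e using Sym2.ind with | _ p q => ?_
    have hpq : (modifiedRookGraph f g).Adj p q := by
      rw [← mem_edgeSet, he]
      rfl
    exact hsep p q hpq ((rookGraph_bool_sdiff_reachable_iff hG hpq).mpr he)
  · intro hone p q hpq hreach
    exact hone ⟨_, (rookGraph_bool_sdiff_reachable_iff hG hpq).mp hreach⟩
end

section
/- Let 𝒳, 𝒴 be types and n a natural number. For all tuples (x, y), (x', y') ∈ (𝒳 × 𝒴)ⁿ (viewing x, x' ∈ 𝒳ⁿ and y, y' ∈ 𝒴ⁿ) with (x, y) ≠ (x', y'), the following are equivalent: (1) (x = x' and y ≠ y') or (y = y' and x ≠ x'); (2) either for every i, ((x_i, y_i) = (x'_i, y'_i) or (x_i = x'_i ∧ y_i ≠ y'_i)), or for every i, ((x_i, y_i) = (x'_i, y'_i) or (y_i = y'_i ∧ x_i ≠ x'_i)). -/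
/-! In an AND product of the graph "same first coordinate, different second coordinate", two
tuples are adjacent or equal iff their first coordinates agree; symmetrically for the second
graph. So the union of the two AND products relates distinct tuples with `x = x'` or `y = y'`,
and for distinct tuples this disjunction is the exclusive one defining the `n`-instance graph. -/

theorem forall_eq_and_eq_or_eq_and_ne_iff {ι α β : Type*} (x x' : ι → α) (y y' : ι → β) :
    (∀ i, (x i = x' i ∧ y i = y' i) ∨ (x i = x' i ∧ y i ≠ y' i)) ↔ x = x' := by
  simp only [← and_or_left, em, and_true, funext_iff]

theorem forall_eq_and_eq_or_eq_and_ne_iff' {ι α β : Type*} (x x' : ι → α) (y y' : ι → β) :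
    (∀ i, (x i = x' i ∧ y i = y' i) ∨ (y i = y' i ∧ x i ≠ x' i)) ↔ y = y' := by
  simpa only [and_comm (a := x _ = x' _)] using forall_eq_and_eq_or_eq_and_ne_iff y y' x x'

/-- The graph identity `G(n) = G₁^{∧n} ∪ G₂^{∧n}` used in the proof of Theorem 1:
for distinct pairs of `n`-tuples `(x, y)` and `(x', y')`, adjacency in the
`n`-instance complementary delivery graph ((`x = x'` and `y ≠ y'`) or (`y = y'`
and `x ≠ x'`)) holds iff adjacency holds in the union of the `n`-fold AND products
of the two single-instance characteristic graphs. -/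
theorem complementary_delivery_graph_eq_union_and_products
    {𝒳 𝒴 : Type*} (n : ℕ) (x x' : Fin n → 𝒳) (y y' : Fin n → 𝒴)
    (hne : (x, y) ≠ (x', y')) :
    ((x = x' ∧ y ≠ y') ∨ (y = y' ∧ x ≠ x')) ↔
      ((∀ i : Fin n, (x i = x' i ∧ y i = y' i) ∨ (x i = x' i ∧ y i ≠ y' i)) ∨
       (∀ i : Fin n, (x i = x' i ∧ y i = y' i) ∨ (y i = y' i ∧ x i ≠ x' i))) := by
  rw [forall_eq_and_eq_or_eq_and_ne_iff, forall_eq_and_eq_or_eq_and_ne_iff']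
  exact (xor_iff_or_and_not_and _ _).trans (and_iff_left (Prod.mk_inj.not.mp hne))
end

section
/- Let ι be a finite index type, for each j ∈ ι let α_j be a type, let S ⊆ Π j, α_j, let C be a type, and let φ : (Π j, α_j) → C. Let m be a finite set of receivers and for each receiver i let H(i) ⊆ ι. There exist maps ψ_i (one per receiver) such that for every receiver i and every x ∈ S, ψ_i(φ(x), x restricted to H(i)) = x restricted to H(i)ᶜ, if and only if φ is a proper coloring of the graph G with vertex set S in which distinct x, x' ∈ S are adjacent exactly when there exists a receiver i with x and x' agreeing on all coordinates in H(i) (i.e., φ(x) ≠ φ(x') whenever x ≠ x' agree on H(i) for some receiver i). -/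
/-!
Decoders can be chosen receiver by receiver, and receiver `i` can decode exactly when the
unknown part `x|(H i)ᶜ` is a function of `(φ x, x|H i)` on `S`. Since `x` is determined by
`x|H i` together with `x|(H i)ᶜ`, that says no two distinct tuples of `S` agreeing on `H i`
share a color.
-/

theorem exists_comp_eqOn_iff {X Y Z : Type*} [Nonempty Z] (s : Set X) (g : X → Y) (f : X → Z) :
    (∃ ψ : Y → Z, ∀ x ∈ s, ψ (g x) = f x) ↔ ∀ x ∈ s, ∀ x' ∈ s, g x = g x' → f x = f x' := by
  refine ⟨fun ⟨ψ, hψ⟩ x hx x' hx' hg => by rw [← hψ x hx, ← hψ x' hx', hg], fun hf => ?_⟩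
  have hfac : Function.FactorsThrough (fun x : s => f x) (fun x : s => g x) :=
    fun x x' hg => hf x x.2 x' x'.2 hg
  exact ⟨Function.extend (fun x : s => g x) (fun x : s => f x) fun _ => Classical.arbitrary Z,
    fun x hx => hfac.extend_apply _ ⟨x, hx⟩⟩

section Restrict

variable {ι : Type*} {α : ι → Type*} {x x' : ∀ j, α j}

theorem Finset.restrict_eq_restrict_iff {s : Finset ι} :
    (fun j : s => x j) = (fun j : s => x' j) ↔ ∀ j ∈ s, x j = x' j := by
  simp only [funext_iff, Subtype.forall]

theorem Finset.eq_iff_forall_mem_compl [Fintype ι] [DecidableEq ι] {s : Finset ι}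
    (h : ∀ j ∈ s, x j = x' j) : x = x' ↔ ∀ j ∈ sᶜ, x j = x' j :=
  ⟨fun hxx' _ _ => hxx' ▸ rfl, fun hc => funext fun j =>
    if hj : j ∈ s then h j hj else hc j (Finset.mem_compl.mpr hj)⟩

end Restrict

theorem index_coding_decodable_iff_coloring_general
    {ι : Type*} [Fintype ι] [DecidableEq ι] {α : ι → Type*} [∀ j, Nonempty (α j)]
    (S : Set (∀ j, α j)) {C : Type*} (φ : (∀ j, α j) → C)
    {R : Type*} (H : R → Finset ι) :
    (∃ ψ : ∀ i : R, C × (∀ j : (H i : Finset ι), α j) → (∀ j : ((H i)ᶜ : Finset ι), α j),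
        ∀ i : R, ∀ x ∈ S,
          ψ i (φ x, fun j => x j) = fun j : ((H i)ᶜ : Finset ι) => x j) ↔
      (∀ x ∈ S, ∀ x' ∈ S, x ≠ x' → (∃ i : R, ∀ j ∈ H i, x j = x' j) → φ x ≠ φ x') := by
  calc _ ↔ ∀ i : R, ∃ ψi : C × (∀ j : (H i : Finset ι), α j) → (∀ j : ((H i)ᶜ : Finset ι), α j),
          ∀ x ∈ S, ψi (φ x, fun j => x j) = fun j : ((H i)ᶜ : Finset ι) => x j :=
        Classical.skolem.symm
    _ ↔ ∀ i : R, ∀ x ∈ S, ∀ x' ∈ S, (φ x, fun j : (H i : Finset ι) => x j) =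
          (φ x', fun j : (H i : Finset ι) => x' j) →
          (fun j : ((H i)ᶜ : Finset ι) => x j) = fun j : ((H i)ᶜ : Finset ι) => x' j :=
        forall_congr' fun i => exists_comp_eqOn_iff S _ _
    _ ↔ _ := by
      simp only [Prod.mk.injEq, Finset.restrict_eq_restrict_iff]
      constructor
      · rintro h x hx x' hx' hne ⟨i, hi⟩ hφ
        exact hne ((Finset.eq_iff_forall_mem_compl hi).2 (h i x hx x' hx' ⟨hφ, hi⟩))
      · rintro h i x hx x' hx' ⟨hφ, hi⟩
        rw [← Finset.eq_iff_forall_mem_compl hi]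
        by_contra hne
        exact h x hx x' hx' hne ⟨i, hi⟩ hφ

/-- Zero-error characterization for complementary delivery index coding: every
receiver `i`, which has side information `x` restricted to `H i`, can recover the
remaining coordinates of every `x ∈ S` from `φ(x)` if and only if `φ` is a proper
coloring of the union of the receivers' characteristic graphs (distinct tuples in
`S` agreeing on `H i` for some receiver `i` get different colors). -/
theorem index_coding_decodable_iff_coloring
    {ι : Type*} [Fintype ι] [DecidableEq ι] {α : ι → Type*} [∀ j, Nonempty (α j)]
    (S : Set (∀ j, α j)) {C : Type*} (φ : (∀ j, α j) → C)
    {R : Type*} [Fintype R] (H : R → Finset ι) :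
    (∃ ψ : ∀ i : R, C × (∀ j : (H i : Finset ι), α j) → (∀ j : ((H i)ᶜ : Finset ι), α j),
        ∀ i : R, ∀ x ∈ S,
          ψ i (φ x, fun j => x j) = fun j : ((H i)ᶜ : Finset ι) => x j) ↔
      (∀ x ∈ S, ∀ x' ∈ S, x ≠ x' → (∃ i : R, ∀ j ∈ H i, x j = x' j) → φ x ≠ φ x') :=
  index_coding_decodable_iff_coloring_general S φ H
end

section
/- Let n be a natural number, let (X_i, Y_i), i = 1, …, n, be random variables on a probability space (Ω, μ) (μ a probability measure) with X_i taking values in a finite type 𝒳 and Y_i in a finite type 𝒴, and suppose the pairs (X₁, Y₁), …, (Xₙ, Yₙ) are jointly independent. Let 𝓜 be a finite type, φ : 𝒳ⁿ × 𝒴ⁿ → 𝓜, and M = φ((X₁, …, Xₙ), (Y₁, …, Yₙ)). Then H[M] ≥ Σ_{i=1}^n I[Y_i : V_i | X_i], where V_i denotes the joint random variable (M, X₁, …, X_{i−1}, Y₁, …, Y_{i−1}). -/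
open MeasureTheory

open ProbabilityTheory

section AuxReal

open Real Finset

lemma negMulLog_add_le {p q : ℝ} (hp : 0 ≤ p) (hq : 0 ≤ q) :
    Real.negMulLog (p + q) ≤ Real.negMulLog p + Real.negMulLog q := by
  rcases eq_or_lt_of_le hp with h | hp'
  · simp [← h]
  rcases eq_or_lt_of_le hq with h | hq'
  · simp [← h]
  have h1 : Real.log p ≤ Real.log (p + q) := Real.log_le_log hp' (by linarith)
  have h2 : Real.log q ≤ Real.log (p + q) := Real.log_le_log hq' (by linarith)
  simp only [Real.negMulLog, neg_mul]
  nlinarith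

lemma negMulLog_sum_le {ι : Type*} (s : Finset ι) (f : ι → ℝ) (hf : ∀ i ∈ s, 0 ≤ f i) :
    Real.negMulLog (∑ i ∈ s, f i) ≤ ∑ i ∈ s, Real.negMulLog (f i) := by
  induction s using Finset.cons_induction with
  | empty => simp
  | cons a s ha ih =>
    rw [Finset.sum_cons, Finset.sum_cons]
    refine le_trans (negMulLog_add_le (hf a (Finset.mem_cons_self a s)) ?_) ?_
    · exact Finset.sum_nonneg fun i hi => hf i (Finset.mem_cons_of_mem hi)
    · exact add_le_add le_rfl (ih fun i hi => hf i (Finset.mem_cons_of_mem hi))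

lemma mul_log_le {a b : ℝ} (ha : 0 ≤ a) (hb : 0 ≤ b) (h : b = 0 → a = 0) :
    a * Real.log b - a * Real.log a ≤ b - a := by
  rcases eq_or_lt_of_le ha with h0 | ha'
  · simpa [← h0] using hb
  · have hbne : b ≠ 0 := fun hb0 => absurd (h hb0) (by linarith)
    have hb' : 0 < b := lt_of_le_of_ne hb (Ne.symm hbne)
    have hlog := Real.log_le_sub_one_of_pos (show 0 < b / a from div_pos hb' ha')
    rw [Real.log_div (ne_of_gt hb') (ne_of_gt ha')] at hlog
    have := mul_le_mul_of_nonneg_left hlog (le_of_lt ha')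
    calc a * Real.log b - a * Real.log a = a * (Real.log b - Real.log a) := by ring
    _ ≤ a * (b / a - 1) := this
    _ = b - a := by field_simp

lemma core_submod {ζ η θ : Type*} [Fintype ζ] [Fintype η] [Fintype θ]
    (P : ζ → η → θ → ℝ) (hP : ∀ z w y, 0 ≤ P z w y) :
    (∑ z, ∑ w, ∑ y, Real.negMulLog (P z w y)) +
        ∑ z, Real.negMulLog (∑ w, ∑ y, P z w y) ≤
      (∑ z, ∑ y, Real.negMulLog (∑ w, P z w y)) +
        ∑ z, ∑ w, Real.negMulLog (∑ y, P z w y) := by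
  classical
  set A : ζ → η → ℝ := fun z w => ∑ y, P z w y with hA
  set B : ζ → θ → ℝ := fun z y => ∑ w, P z w y with hB
  set C : ζ → ℝ := fun z => ∑ w, ∑ y, P z w y with hC
  set q : ζ → η → θ → ℝ := fun z w y => A z w * B z y / C z with hq
  have hA0 : ∀ z w, 0 ≤ A z w := fun z w => Finset.sum_nonneg fun y _ => hP z w y
  have hB0 : ∀ z y, 0 ≤ B z y := fun z y => Finset.sum_nonneg fun w _ => hP z w y
  have hC0 : ∀ z, 0 ≤ C z := fun z => Finset.sum_nonneg fun w _ => hA0 z w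
  have hq0 : ∀ z w y, 0 ≤ q z w y := fun z w y =>
    div_nonneg (mul_nonneg (hA0 z w) (hB0 z y)) (hC0 z)
  have hPA : ∀ z w y, P z w y ≤ A z w := fun z w y =>
    Finset.single_le_sum (fun y _ => hP z w y) (mem_univ y)
  have hPB : ∀ z w y, P z w y ≤ B z y := fun z w y =>
    Finset.single_le_sum (fun w _ => hP z w y) (mem_univ w)
  have hAC : ∀ z w, A z w ≤ C z := fun z w =>
    Finset.single_le_sum (fun w _ => hA0 z w) (mem_univ w)
  have key : ∀ z w y,
      Real.negMulLog (P z w y) + P z w y * (-Real.log (C z)) ≤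
        P z w y * (-Real.log (B z y)) + P z w y * (-Real.log (A z w)) +
          (q z w y - P z w y) := by
    intro z w y
    rcases eq_or_lt_of_le (hP z w y) with h0 | hP'
    · simp only [← h0, Real.negMulLog_zero, zero_mul, add_zero, zero_add, sub_zero]
      simpa using hq0 z w y
    · have hA' : 0 < A z w := lt_of_lt_of_le hP' (hPA z w y)
      have hB' : 0 < B z y := lt_of_lt_of_le hP' (hPB z w y)
      have hC' : 0 < C z := lt_of_lt_of_le hA' (hAC z w)
      have hq' : 0 < q z w y := div_pos (mul_pos hA' hB') hC'
      have hlogq : Real.log (q z w y) =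
          Real.log (A z w) + Real.log (B z y) - Real.log (C z) := by
        rw [hq]
        rw [Real.log_div (ne_of_gt (mul_pos hA' hB')) (ne_of_gt hC'),
          Real.log_mul (ne_of_gt hA') (ne_of_gt hB')]
      have hkey := mul_log_le (le_of_lt hP') (le_of_lt hq')
        (fun h => absurd h (ne_of_gt hq'))
      rw [hlogq] at hkey
      simp only [Real.negMulLog]
      nlinarith [hkey]
  have eC : ∀ z, Real.negMulLog (C z) = ∑ w, ∑ y, P z w y * (-Real.log (C z)) := by
    intro z
    simp only [← Finset.sum_mul]
    simp [Real.negMulLog, hC]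
  have eA : ∀ z w, Real.negMulLog (A z w) = ∑ y, P z w y * (-Real.log (A z w)) := by
    intro z w
    simp only [← Finset.sum_mul]
    simp [Real.negMulLog, hA]
  have eB : ∀ z, (∑ y, Real.negMulLog (B z y)) =
      ∑ w, ∑ y, P z w y * (-Real.log (B z y)) := by
    intro z
    rw [Finset.sum_comm]
    refine Finset.sum_congr rfl fun y _ => ?_
    simp only [← Finset.sum_mul]
    simp [Real.negMulLog, hB]
  have hqz : ∀ z, (∑ w, ∑ y, q z w y) = C z := by
    intro z
    rcases eq_or_ne (C z) 0 with h0 | h0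
    · simp [hq, h0, div_zero]
    · have : (∑ w, ∑ y, q z w y) = ((∑ w, A z w) * (∑ y, B z y)) / C z := by
        rw [Finset.sum_mul_sum]
        simp only [hq, Finset.sum_div]
      rw [this]
      have h1 : (∑ w, A z w) = C z := rfl
      have h2 : (∑ y, B z y) = C z := Finset.sum_comm
      rw [h1, h2]
      field_simp
  have hslack : (∑ z, ∑ w, ∑ y, (q z w y - P z w y)) = 0 := by
    simp only [Finset.sum_sub_distrib]
    have : ∀ z, (∑ w, ∑ y, q z w y) = ∑ w, ∑ y, P z w y := fun z => hqz z
    rw [Finset.sum_congr rfl fun z _ => this z]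
    ring
  have main : (∑ z, ∑ w, ∑ y,
      (Real.negMulLog (P z w y) + P z w y * (-Real.log (C z)))) ≤
      ∑ z, ∑ w, ∑ y, (P z w y * (-Real.log (B z y)) + P z w y * (-Real.log (A z w)) +
        (q z w y - P z w y)) := by
    refine Finset.sum_le_sum fun z _ => Finset.sum_le_sum fun w _ =>
      Finset.sum_le_sum fun y _ => key z w y
  simp only [Finset.sum_add_distrib] at main
  have rC : (∑ z, Real.negMulLog (C z)) = ∑ z, ∑ w, ∑ y, P z w y * (-Real.log (C z)) :=
    Finset.sum_congr rfl fun z _ => eC z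
  have rA : (∑ z, ∑ w, Real.negMulLog (A z w)) =
      ∑ z, ∑ w, ∑ y, P z w y * (-Real.log (A z w)) :=
    Finset.sum_congr rfl fun z _ => Finset.sum_congr rfl fun w _ => eA z w
  have rB : (∑ z, ∑ y, Real.negMulLog (B z y)) =
      ∑ z, ∑ w, ∑ y, P z w y * (-Real.log (B z y)) :=
    Finset.sum_congr rfl fun z _ => eB z
  rw [rC, rA, rB]
  linarith [main, hslack]

lemma negMulLog_prod {ι : Type*} [DecidableEq ι] (s : Finset ι) (f : ι → ℝ) :
    Real.negMulLog (∏ i ∈ s, f i) =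
      ∑ i ∈ s, (∏ j ∈ s.erase i, f j) * Real.negMulLog (f i) := by
  induction s using Finset.induction_on with
  | empty => simp
  | insert a s ha ih =>
    rw [Finset.prod_insert ha, Real.negMulLog_mul, Finset.sum_insert ha,
      Finset.erase_insert ha, ih]
    rw [Finset.mul_sum]
    congr 1
    refine Finset.sum_congr rfl fun i hi => ?_
    rw [Finset.erase_insert_of_ne (by rintro rfl; exact ha hi)]
    rw [Finset.prod_insert (fun h => ha (Finset.mem_of_mem_erase h))]
    ring

lemma sum_negMulLog_prod {ι α : Type*} [Fintype ι] [Fintype α] [DecidableEq ι]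
    (q : ι → α → ℝ) (hq1 : ∀ i, ∑ a, q i a = 1) :
    ∑ z : ι → α, Real.negMulLog (∏ i, q i (z i)) =
      ∑ i, ∑ a, Real.negMulLog (q i a) := by
  classical
  have e1 : ∀ z : ι → α, Real.negMulLog (∏ i, q i (z i)) =
      ∑ i, (∏ j ∈ Finset.univ.erase i, q j (z j)) * Real.negMulLog (q i (z i)) :=
    fun z => negMulLog_prod Finset.univ _
  rw [Finset.sum_congr rfl fun z _ => e1 z, Finset.sum_comm]
  refine Finset.sum_congr rfl fun i _ => ?_
  set r : ι → α → ℝ := fun j => if j = i then (fun a => Real.negMulLog (q i a)) else q j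
    with hr
  have hterm : ∀ z : ι → α,
      (∏ j ∈ Finset.univ.erase i, q j (z j)) * Real.negMulLog (q i (z i)) =
        ∏ j, r j (z j) := by
    intro z
    rw [← Finset.mul_prod_erase Finset.univ (fun j => r j (z j)) (Finset.mem_univ i),
      mul_comm]
    congr 1
    · simp [hr]
    · exact Finset.prod_congr rfl fun j hj => by
        simp [hr, Finset.ne_of_mem_erase hj]
  rw [Finset.sum_congr rfl fun z _ => hterm z, ← Fintype.prod_sum fun j a => r j a,
    ← Finset.mul_prod_erase Finset.univ (fun j => ∑ a, r j a) (Finset.mem_univ i)]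
  have h1 : (∑ a, r i a) = ∑ a, Real.negMulLog (q i a) := by simp [hr]
  have h2 : (∏ j ∈ Finset.univ.erase i, ∑ a, r j a) = 1 := by
    refine Finset.prod_eq_one fun j hj => ?_
    have hji : j ≠ i := Finset.ne_of_mem_erase hj
    simp [hr, hji, hq1 j]
  rw [h1, h2, mul_one]

end AuxReal

section AuxMeas

open Finset

variable {Ω : Type*} [MeasurableSpace Ω] (μ : Measure Ω)

lemma sum_toReal_preimage_singleton [IsProbabilityMeasure μ] {α : Type*} [Fintype α]
    (V : Ω → α) (hV : ∀ v, MeasurableSet (V ⁻¹' {v})) :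
    ∑ v : α, (μ (V ⁻¹' {v})).toReal = 1 := by
  rw [← ENNReal.toReal_sum (fun v _ => measure_ne_top μ _),
    MeasureTheory.sum_measure_preimage_singleton Finset.univ (fun v _ => hV v)]
  simp

lemma ent_nonneg [IsProbabilityMeasure μ] {α : Type*} [Fintype α] (V : Ω → α) :
    0 ≤ ent μ V := by
  refine Finset.sum_nonneg fun a _ => Real.negMulLog_nonneg ENNReal.toReal_nonneg ?_
  have h := prob_le_one (μ := μ) (s := V ⁻¹' {a})
  simpa using ENNReal.toReal_mono (by simp) h

lemma ent_comp_of_injective {γ δ : Type*} [Fintype γ] [Fintype δ]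
    (U : Ω → γ) (g : γ → δ) (hg : Function.Injective g) :
    ent μ (fun ω => g (U ω)) = ent μ U := by
  classical
  unfold ent
  have h3 : ∑ d : δ, Real.negMulLog ((μ ((fun ω => g (U ω)) ⁻¹' {d})).toReal) =
      ∑ d ∈ Finset.univ.image g,
        Real.negMulLog ((μ ((fun ω => g (U ω)) ⁻¹' {d})).toReal) := by
    refine (Finset.sum_subset (Finset.subset_univ _) fun d _ hd => ?_).symm
    have : (fun ω => g (U ω)) ⁻¹' {d} = ∅ := by
      ext ω
      simp only [Set.mem_preimage, Set.mem_singleton_iff, Set.mem_empty_iff_false, iff_false]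
      intro h
      exact hd (Finset.mem_image.2 ⟨U ω, Finset.mem_univ _, h⟩)
    simp [this]
  rw [h3, Finset.sum_image (fun c _ c' _ h => hg h)]
  refine Finset.sum_congr rfl fun c _ => ?_
  have : (fun ω => g (U ω)) ⁻¹' {g c} = U ⁻¹' {c} := by
    ext ω; simp [hg.eq_iff]
  rw [this]

lemma ent_comp_le_s16 [IsProbabilityMeasure μ] {γ δ : Type*} [Fintype γ] [Fintype δ]
    (U : Ω → γ) (g : γ → δ) (hU : ∀ c, MeasurableSet (U ⁻¹' {c})) :
    ent μ (fun ω => g (U ω)) ≤ ent μ U := by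
  classical
  unfold ent
  have hfib : ∀ d, (μ ((fun ω => g (U ω)) ⁻¹' {d})).toReal =
      ∑ c ∈ Finset.univ.filter (fun c => g c = d), (μ (U ⁻¹' {c})).toReal := by
    intro d
    rw [← ENNReal.toReal_sum (fun _ _ => measure_ne_top μ _)]
    congr 1
    rw [MeasureTheory.sum_measure_preimage_singleton _ (fun c _ => hU c)]
    congr 1
    ext ω
    simp
  calc ∑ d : δ, Real.negMulLog ((μ ((fun ω => g (U ω)) ⁻¹' {d})).toReal)
      = ∑ d : δ, Real.negMulLog
          (∑ c ∈ Finset.univ.filter (fun c => g c = d), (μ (U ⁻¹' {c})).toReal) := by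
        exact Finset.sum_congr rfl fun d _ => by rw [hfib d]
    _ ≤ ∑ d : δ, ∑ c ∈ Finset.univ.filter (fun c => g c = d),
          Real.negMulLog ((μ (U ⁻¹' {c})).toReal) := by
        exact Finset.sum_le_sum fun d _ =>
          negMulLog_sum_le _ _ fun c _ => ENNReal.toReal_nonneg
    _ = ∑ c : γ, Real.negMulLog ((μ (U ⁻¹' {c})).toReal) := by
        exact Finset.sum_fiberwise _ _ _

lemma ent_submod [IsProbabilityMeasure μ] {ζ η θ : Type*} [Fintype ζ] [Fintype η] [Fintype θ]
    (Z : Ω → ζ) (W : Ω → η) (Y : Ω → θ)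
    (h3 : ∀ p : ζ × η × θ, MeasurableSet ((fun ω => (Z ω, W ω, Y ω)) ⁻¹' {p})) :
    ent μ (fun ω => (Z ω, W ω, Y ω)) + ent μ Z ≤
      ent μ (fun ω => (Z ω, Y ω)) + ent μ (fun ω => (Z ω, W ω)) := by
  classical
  set T : Ω → ζ × η × θ := fun ω => (Z ω, W ω, Y ω) with hT
  set P : ζ → η → θ → ℝ := fun z w y => (μ (T ⁻¹' {(z, w, y)})).toReal with hP
  have msum : ∀ s : Finset (ζ × η × θ),
      (μ (T ⁻¹' ↑s)).toReal = ∑ p ∈ s, (μ (T ⁻¹' {p})).toReal := by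
    intro s
    rw [← MeasureTheory.sum_measure_preimage_singleton s (fun p _ => h3 p),
      ENNReal.toReal_sum (fun _ _ => measure_ne_top μ _)]
  have hZW : ∀ z w, (μ ((fun ω => (Z ω, W ω)) ⁻¹' {(z, w)})).toReal = ∑ y, P z w y := by
    intro z w
    have hset : (fun ω => (Z ω, W ω)) ⁻¹' {(z, w)} =
        T ⁻¹' ↑(({z} : Finset ζ) ×ˢ ({w} : Finset η) ×ˢ (Finset.univ : Finset θ)) := by
      ext ω
      simp [hT, Prod.ext_iff, eq_comm]
    rw [hset, msum]
    simp [Finset.sum_product]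
    rfl
  have hZY : ∀ z y, (μ ((fun ω => (Z ω, Y ω)) ⁻¹' {(z, y)})).toReal = ∑ w, P z w y := by
    intro z y
    have hset : (fun ω => (Z ω, Y ω)) ⁻¹' {(z, y)} =
        T ⁻¹' ↑(({z} : Finset ζ) ×ˢ (Finset.univ : Finset η) ×ˢ ({y} : Finset θ)) := by
      ext ω
      simp [hT, Prod.ext_iff, eq_comm]
    rw [hset, msum]
    simp [Finset.sum_product]
    rfl
  have hZ : ∀ z, (μ (Z ⁻¹' {z})).toReal = ∑ w, ∑ y, P z w y := by
    intro z
    have hset : Z ⁻¹' {z} =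
        T ⁻¹' ↑(({z} : Finset ζ) ×ˢ (Finset.univ : Finset (η × θ))) := by
      ext ω
      simp [hT, Prod.ext_iff, eq_comm]
    rw [hset, msum]
    simp [Finset.sum_product, Fintype.sum_prod_type]
    rfl
  have e1 : ent μ T = ∑ z, ∑ w, ∑ y, Real.negMulLog (P z w y) := by
    unfold ent
    rw [Fintype.sum_prod_type]
    exact Finset.sum_congr rfl fun z _ => by rw [Fintype.sum_prod_type]
  have e2 : ent μ Z = ∑ z, Real.negMulLog (∑ w, ∑ y, P z w y) :=
    Finset.sum_congr rfl fun z _ => by rw [hZ z]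
  have e3 : ent μ (fun ω => (Z ω, Y ω)) = ∑ z, ∑ y, Real.negMulLog (∑ w, P z w y) := by
    unfold ent
    rw [Fintype.sum_prod_type]
    exact Finset.sum_congr rfl fun z _ => Finset.sum_congr rfl fun y _ => by rw [hZY z y]
  have e4 : ent μ (fun ω => (Z ω, W ω)) = ∑ z, ∑ w, Real.negMulLog (∑ y, P z w y) := by
    unfold ent
    rw [Fintype.sum_prod_type]
    exact Finset.sum_congr rfl fun z _ => Finset.sum_congr rfl fun w _ => by rw [hZW z w]
  rw [show ent μ (fun ω => (Z ω, W ω, Y ω)) = ent μ T from rfl, e1, e2, e3, e4]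
  exact core_submod P fun z w y => ENNReal.toReal_nonneg

lemma ent_unit_pair_eq {γ : Type*} [Fintype γ] (S : Ω → γ) :
    ent μ (fun ω => ((), S ω)) = ent μ S :=
  ent_comp_of_injective μ S (fun s => ((), s)) fun a b h => by
    simpa using congrArg Prod.snd h

lemma ent_pair_le [IsProbabilityMeasure μ] {γ δ : Type*} [Fintype γ] [Fintype δ]
    (S : Ω → γ) (T : Ω → δ)
    (h : ∀ p : γ × δ, MeasurableSet ((fun ω => (S ω, T ω)) ⁻¹' {p})) :
    ent μ (fun ω => (S ω, T ω)) ≤ ent μ S + ent μ T := by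
  have h3 : ∀ p : Unit × γ × δ,
      MeasurableSet ((fun ω => ((() : Unit), S ω, T ω)) ⁻¹' {p}) := by
    rintro ⟨u, s, t⟩
    have : (fun ω => ((() : Unit), S ω, T ω)) ⁻¹' {(u, s, t)} =
        (fun ω => (S ω, T ω)) ⁻¹' {(s, t)} := by
      ext ω; simp [Prod.ext_iff]
    rw [this]
    exact h (s, t)
  have hsub := ent_submod μ (fun _ => ()) S T h3
  have hu : ent μ (fun _ : Ω => ()) = 0 := by
    unfold ent
    have : (fun _ : Ω => ()) ⁻¹' {()} = Set.univ := by ext ω; simp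
    simp [this]
  have h1 : ent μ (fun ω => ((() : Unit), S ω, T ω)) = ent μ (fun ω => (S ω, T ω)) :=
    ent_unit_pair_eq μ (fun ω => (S ω, T ω))
  have h2 : ent μ (fun ω => ((() : Unit), T ω)) = ent μ T := ent_unit_pair_eq μ T
  have h4 : ent μ (fun ω => ((() : Unit), S ω)) = ent μ S := ent_unit_pair_eq μ S
  rw [h1, hu, h2, h4] at hsub
  linarith

lemma ent_tuple_of_prod [IsProbabilityMeasure μ] {m : ℕ} {α : Type*} [Fintype α]
    (Z : Fin m → Ω → α) (hZ : ∀ i v, MeasurableSet (Z i ⁻¹' {v}))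
    (hprod : ∀ z : Fin m → α,
      μ ((fun ω => (fun i => Z i ω)) ⁻¹' {z}) = ∏ i, μ (Z i ⁻¹' {z i})) :
    ent μ (fun ω => (fun i => Z i ω)) = ∑ i, ent μ (Z i) := by
  classical
  unfold ent
  have h1 : ∀ z : Fin m → α, (μ ((fun ω => (fun i => Z i ω)) ⁻¹' {z})).toReal =
      ∏ i, (μ (Z i ⁻¹' {z i})).toReal := by
    intro z
    rw [hprod z, ENNReal.toReal_prod]
  rw [Finset.sum_congr rfl fun z _ => by rw [h1 z]]
  exact sum_negMulLog_prod (fun i a => (μ (Z i ⁻¹' {a})).toReal)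
    (fun i => sum_toReal_preimage_singleton μ (Z i) (hZ i))

end AuxMeas

set_option maxHeartbeats 1000000 in
/-- Single-letterization converse (outer bound `R_O`) of Theorem 3(ii): if the
pairs `(X_i, Y_i)`, `i = 1, …, n`, are jointly independent and
`M = φ(Xⁿ, Yⁿ)`, then `H[M] ≥ Σ_i I[Y_i : V_i | X_i]`, where
`V_i = (M, X^{i-1}, Y^{i-1})` and `I[Y_i : V_i | X_i]` is expanded as
`H[Y_i | X_i] - H[Y_i | (X_i, V_i)]`. -/
theorem single_letterization_converse
    {Ω : Type*} [MeasurableSpace Ω] (μ : Measure Ω) [IsProbabilityMeasure μ]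
    {𝒳 𝒴 : Type*} [Fintype 𝒳] [Fintype 𝒴]
    [MeasurableSpace 𝒳] [MeasurableSingletonClass 𝒳]
    [MeasurableSpace 𝒴] [MeasurableSingletonClass 𝒴]
    (n : ℕ) (X : Fin n → Ω → 𝒳) (Y : Fin n → Ω → 𝒴)
    (hX : ∀ i, Measurable (X i)) (hY : ∀ i, Measurable (Y i))
    (hindep : iIndepFun (fun i ω => (X i ω, Y i ω)) μ)
    {𝓜 : Type*} [Fintype 𝓜] (φ : (Fin n → 𝒳) × (Fin n → 𝒴) → 𝓜) :
    ent μ (fun ω => φ (fun k => X k ω, fun k => Y k ω)) ≥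
      ∑ i : Fin n,
        (condEnt μ (X i) (Y i) -
          condEnt μ
            (fun ω => (X i ω,
              (φ (fun k => X k ω, fun k => Y k ω),
               fun j : Fin i => X ⟨j, j.isLt.trans i.isLt⟩ ω,
               fun j : Fin i => Y ⟨j, j.isLt.trans i.isLt⟩ ω)))
            (Y i)) := by
  classical
  rcases Nat.eq_zero_or_pos n with hn0 | hn
  · subst hn0
    simpa using ent_nonneg μ (fun ω => φ (fun k => X k ω, fun k => Y k ω))
  letI : MeasurableSpace 𝓜 := ⊤
  haveI : MeasurableSingletonClass 𝓜 := ⟨fun _ => MeasurableSpace.measurableSet_top⟩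
  -- basic measurability
  have hXn : Measurable (fun ω => (fun k => X k ω : Fin n → 𝒳)) :=
    measurable_pi_lambda _ hX
  have hYn : Measurable (fun ω => (fun k => Y k ω : Fin n → 𝒴)) :=
    measurable_pi_lambda _ hY
  have hMmeas : Measurable (fun ω => φ (fun k => X k ω, fun k => Y k ω)) :=
    (measurable_of_finite φ).comp (hXn.prodMk hYn)
  -- index-shifted Y's
  set YY : ℕ → Ω → 𝒴 := fun j ω => Y ⟨j % n, Nat.mod_lt _ hn⟩ ω with hYY
  have hYYm : ∀ j, Measurable (YY j) := fun j => hY _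
  -- the chain of auxiliary random variables
  set B : (k : ℕ) → Ω → ((Fin n → 𝒳) × 𝓜) × (Fin k → 𝒴) :=
    fun k ω => ((fun i => X i ω, φ (fun k' => X k' ω, fun k' => Y k' ω)),
      fun j : Fin k => YY j ω) with hB
  have hBm : ∀ k, Measurable (B k) :=
    fun k => (hXn.prodMk hMmeas).prodMk (measurable_pi_lambda _ fun j => hYYm j)
  set f : ℕ → ℝ := fun k => ent μ (B k) with hf
  -- per-index step
  have step : ∀ i : Fin n,
      f (↑i + 1) - f ↑i ≤
        condEnt μ
          (fun ω => (X i ω,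
            (φ (fun k => X k ω, fun k => Y k ω),
             fun j : Fin i => X ⟨j, j.isLt.trans i.isLt⟩ ω,
             fun j : Fin i => Y ⟨j, j.isLt.trans i.isLt⟩ ω)))
          (Y i) := by
    intro i
    set g : ((Fin n → 𝒳) × 𝓜) × (Fin (i : ℕ) → 𝒴) →
        𝒳 × (𝓜 × (Fin (i : ℕ) → 𝒳) × (Fin (i : ℕ) → 𝒴)) :=
      fun b => (b.1.1 i,
        (b.1.2, fun j : Fin (i : ℕ) => b.1.1 ⟨j, j.isLt.trans i.isLt⟩, b.2)) with hg
    have hgB : (fun ω => (X i ω,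
        (φ (fun k => X k ω, fun k => Y k ω),
         fun j : Fin i => X ⟨j, j.isLt.trans i.isLt⟩ ω,
         fun j : Fin i => Y ⟨j, j.isLt.trans i.isLt⟩ ω))) =
        fun ω => g (B (↑i) ω) := by
      funext ω
      simp only [hg, hB]
      refine Prod.ext rfl (Prod.ext rfl (Prod.ext rfl ?_))
      funext j
      have hjn : (j : ℕ) < n := j.isLt.trans i.isLt
      simp only [hYY]
      have e : (⟨(j : ℕ) % n, Nat.mod_lt _ hn⟩ : Fin n) = ⟨j, hjn⟩ :=
        Fin.ext (Nat.mod_eq_of_lt hjn)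
      rw [e]
    have hZm : Measurable (fun ω => g (B (↑i) ω)) :=
      (measurable_of_finite g).comp (hBm ↑i)
    have h3 : ∀ p, MeasurableSet ((fun ω => (g (B (↑i) ω), B (↑i) ω, Y i ω)) ⁻¹' {p}) :=
      fun p => (hZm.prodMk ((hBm ↑i).prodMk (hY i))) (measurableSet_singleton p)
    have hsub := ent_submod μ (fun ω => g (B (↑i) ω)) (B ↑i) (Y i) h3
    have eZW : ent μ (fun ω => (g (B (↑i) ω), B (↑i) ω)) = ent μ (B ↑i) :=
      ent_comp_of_injective μ (B ↑i) (fun b => (g b, b))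
        (fun a b h => congrArg Prod.snd h)
    have eZWY : ent μ (fun ω => (g (B (↑i) ω), B (↑i) ω, Y i ω)) =
        ent μ (fun ω => (B (↑i) ω, Y i ω)) :=
      ent_comp_of_injective μ (fun ω => (B (↑i) ω, Y i ω))
        (fun p => (g p.1, p)) (fun a b h => congrArg Prod.snd h)
    have hsnoc_inj : Function.Injective
        (fun p : (((Fin n → 𝒳) × 𝓜) × (Fin (i : ℕ) → 𝒴)) × 𝒴 =>
          (p.1.1, (Fin.snoc p.1.2 p.2 : Fin ((i : ℕ) + 1) → 𝒴))) := by
      rintro ⟨⟨a, ys⟩, y⟩ ⟨⟨a', ys'⟩, y'⟩ h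
      simp only [Prod.mk.injEq] at h
      obtain ⟨h1, h2⟩ := h
      have h3 : ys = ys' := by
        have := congrArg (fun t => Fin.init t) h2
        simpa [Fin.init_snoc] using this
      have h4 : y = y' := by
        have := congrArg (fun t => t (Fin.last _)) h2
        simpa [Fin.snoc_last] using this
      simp [h1, h3, h4]
    have hsucc : B ((i : ℕ) + 1) = fun ω =>
        ((fun p : (((Fin n → 𝒳) × 𝓜) × (Fin (i : ℕ) → 𝒴)) × 𝒴 =>
          (p.1.1, (Fin.snoc p.1.2 p.2 : Fin ((i : ℕ) + 1) → 𝒴))) ((B ↑i ω, Y i ω))) := by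
      funext ω
      simp only [hB]
      refine Prod.ext rfl ?_
      show (fun j : Fin ((i : ℕ) + 1) => YY ↑j ω) =
        (Fin.snoc (fun j : Fin (i : ℕ) => YY ↑j ω) (Y i ω) : Fin ((i : ℕ) + 1) → 𝒴)
      funext j
      induction j using Fin.lastCases with
      | last =>
        rw [Fin.snoc_last]
        show YY ↑(Fin.last (i : ℕ)) ω = Y i ω
        simp only [hYY, Fin.val_last]
        have e : (⟨(i : ℕ) % n, Nat.mod_lt _ hn⟩ : Fin n) = i :=
          Fin.ext (Nat.mod_eq_of_lt i.isLt)
        rw [e]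
      | cast j =>
        rw [Fin.snoc_castSucc]
        show YY ↑(Fin.castSucc j) ω = YY ↑j ω
        rw [Fin.coe_castSucc]
    have eBY : ent μ (fun ω => (B (↑i) ω, Y i ω)) = f ((i : ℕ) + 1) := by
      have h1 : f ((i : ℕ) + 1) = ent μ (B ((i : ℕ) + 1)) := by rw [hf]
      rw [h1, hsucc]
      exact (ent_comp_of_injective μ (fun ω => (B (↑i) ω, Y i ω)) _ hsnoc_inj).symm
    have efi : f ↑i = ent μ (B ↑i) := by rw [hf]
    rw [eZWY, eZW, eBY] at hsub
    have hcond : condEnt μ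
        (fun ω => (X i ω,
          (φ (fun k => X k ω, fun k => Y k ω),
           fun j : Fin i => X ⟨j, j.isLt.trans i.isLt⟩ ω,
           fun j : Fin i => Y ⟨j, j.isLt.trans i.isLt⟩ ω)))
        (Y i) =
        ent μ (fun ω => (g (B (↑i) ω), Y i ω)) - ent μ (fun ω => g (B (↑i) ω)) := by
      rw [condEnt, hgB]
      have h5 : (fun ω => ((X i ω,
          (φ (fun k => X k ω, fun k => Y k ω),
           fun j : Fin i => X ⟨j, j.isLt.trans i.isLt⟩ ω,
           fun j : Fin i => Y ⟨j, j.isLt.trans i.isLt⟩ ω)), Y i ω)) =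
          (fun ω => (g (B (↑i) ω), Y i ω)) := by
        funext ω
        exact congrArg (fun t => (t, Y i ω)) (congrFun hgB ω)
      rw [h5]
    rw [hcond, efi]
    linarith
  -- telescoping
  have tele : ∑ i : Fin n, (f (↑i + 1) - f ↑i) = f n - f 0 := by
    rw [Fin.sum_univ_eq_sum_range (fun k => f (k + 1) - f k) n]
    exact Finset.sum_range_sub f n
  -- identify f n
  have hfn : f n = ent μ (fun ω => (fun i : Fin n => (X i ω, Y i ω))) := by
    have hBn : B n = fun ω =>
        ((fun w : Fin n → 𝒳 × 𝒴 =>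
          ((fun i => (w i).1, φ (fun i => (w i).1, fun i => (w i).2)),
            fun i => (w i).2))
          ((fun i : Fin n => (X i ω, Y i ω)))) := by
      funext ω
      simp only [hB]
      refine Prod.ext rfl ?_
      funext j
      show YY ↑j ω = Y j ω
      simp only [hYY]
      have e : (⟨(j : ℕ) % n, Nat.mod_lt _ hn⟩ : Fin n) = j :=
        Fin.ext (Nat.mod_eq_of_lt j.isLt)
      rw [e]
    have hinj : Function.Injective
        (fun w : Fin n → 𝒳 × 𝒴 =>
          ((fun i => (w i).1, φ (fun i => (w i).1, fun i => (w i).2)),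
            fun i => (w i).2)) := by
      intro w w' h
      have h1' := congrArg (fun p => p.1.1) h
      have h2' := congrArg Prod.snd h
      funext i
      exact Prod.ext (congrFun h1' i) (congrFun h2' i)
    have h1 : f n = ent μ (B n) := by rw [hf]
    rw [h1, hBn]
    exact ent_comp_of_injective μ (fun ω => (fun i : Fin n => (X i ω, Y i ω)))
      (fun w : Fin n → 𝒳 × 𝒴 =>
        ((fun i => (w i).1, φ (fun i => (w i).1, fun i => (w i).2)),
          fun i => (w i).2)) hinj
  -- identify f 0
  have hf0 : f 0 = ent μ (fun ω =>
      ((fun i => X i ω : Fin n → 𝒳), φ (fun k => X k ω, fun k => Y k ω))) := by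
    have hB0 : B 0 = fun ω =>
        ((fun p : (Fin n → 𝒳) × 𝓜 => (p, fun j : Fin 0 => j.elim0))
          ((fun i => X i ω, φ (fun k => X k ω, fun k => Y k ω)))) := by
      funext ω
      simp only [hB]
      refine Prod.ext rfl ?_
      funext j
      exact j.elim0
    have h1 : f 0 = ent μ (B 0) := by rw [hf]
    rw [h1, hB0]
    exact ent_comp_of_injective μ
      (fun ω => ((fun i => X i ω : Fin n → 𝒳), φ (fun k => X k ω, fun k => Y k ω)))
      (fun p : (Fin n → 𝒳) × 𝓜 => (p, fun j : Fin 0 => j.elim0))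
      (fun a b h => congrArg Prod.fst h)
  -- independence: joint entropy of the tuple splits
  have hmXY : ∀ (i : Fin n) (v : 𝒳 × 𝒴),
      MeasurableSet ((fun ω => (X i ω, Y i ω)) ⁻¹' {v}) :=
    fun i v => ((hX i).prodMk (hY i)) (measurableSet_singleton v)
  have hprodXY : ∀ z : Fin n → 𝒳 × 𝒴,
      μ ((fun ω => (fun i : Fin n => (X i ω, Y i ω))) ⁻¹' {z}) =
        ∏ i, μ ((fun ω => (X i ω, Y i ω)) ⁻¹' {z i}) := by
    intro z
    have h := hindep.measure_inter_preimage_eq_mul (S := Finset.univ)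
      (sets := fun i => {z i}) (fun i _ => measurableSet_singleton _)
    have hset : (fun ω => (fun i : Fin n => (X i ω, Y i ω))) ⁻¹' {z} =
        ⋂ i ∈ Finset.univ, (fun ω => (X i ω, Y i ω)) ⁻¹' {z i} := by
      ext ω
      simp [funext_iff]
    rw [hset]
    simpa using h
  have hentW : ent μ (fun ω => (fun i : Fin n => (X i ω, Y i ω))) =
      ∑ i, ent μ (fun ω => (X i ω, Y i ω)) :=
    ent_tuple_of_prod μ (fun i ω => (X i ω, Y i ω)) hmXY hprodXY
  have hprodX : ∀ x : Fin n → 𝒳,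
      μ ((fun ω => (fun i : Fin n => X i ω)) ⁻¹' {x}) =
        ∏ i, μ (X i ⁻¹' {x i}) := by
    intro x
    have h := hindep.measure_inter_preimage_eq_mul (S := Finset.univ)
      (sets := fun i => Prod.fst ⁻¹' {x i})
      (fun i _ => measurable_fst (measurableSet_singleton _))
    have hset : (fun ω => (fun i : Fin n => X i ω)) ⁻¹' {x} =
        ⋂ i ∈ Finset.univ, (fun ω => (X i ω, Y i ω)) ⁻¹' (Prod.fst ⁻¹' {x i}) := by
      ext ω
      simp [funext_iff]
    rw [hset]
    exact h
  have hentX : ent μ (fun ω => (fun i : Fin n => X i ω)) = ∑ i, ent μ (X i) :=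
    ent_tuple_of_prod μ X (fun i v => hX i (measurableSet_singleton v)) hprodX
  -- subadditivity for the pair (Xⁿ, M)
  have hpair : ent μ (fun ω =>
      ((fun i => X i ω : Fin n → 𝒳), φ (fun k => X k ω, fun k => Y k ω))) ≤
      ent μ (fun ω => (fun i : Fin n => X i ω)) +
        ent μ (fun ω => φ (fun k => X k ω, fun k => Y k ω)) :=
    ent_pair_le μ _ _
      (fun p => (hXn.prodMk hMmeas) (measurableSet_singleton p))
  -- conclude
  rw [ge_iff_le]
  have hsum1 : ∑ i : Fin n, condEnt μ (X i) (Y i) =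
      ent μ (fun ω => (fun i : Fin n => (X i ω, Y i ω))) -
        ent μ (fun ω => (fun i : Fin n => X i ω)) := by
    simp only [condEnt]
    rw [Finset.sum_sub_distrib, hentW, hentX]
  refine le_trans (Finset.sum_le_sum fun i _ =>
    sub_le_sub_left (step i) (condEnt μ (X i) (Y i))) ?_
  rw [Finset.sum_sub_distrib, tele, hsum1, hfn, hf0]
  linarith [hpair]
end
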